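/- Assume the McKay Conjecture holds for the prime p: for every finite group H and Sylow p-subgroup Q of H, μ_p(H) = μ_p(N_H(Q)). Then for every finite group G with Sylow p-subgroup P and N = N_G(P), if R is a set of representatives for the conjugacy classes of G of cardinality coprime to p and S is a set of representatives for the conjugacy classes of N of cardinality coprime to p, then Σ_{g ∈ R} μ_p(C_G(g)) = Σ_{n ∈ S} μ_p(C_N(n)). -/

import Mathlib

open CategoryTheory

/-- `mu p H` is the number of isomorphism classes of irreducible finite-dimensional
complex representations of `H` whose dimension is coprime to `p`. -/
noncomputable def mu (p : ℕ) (H : Type) [Group H] : ℕ :=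
  Nat.card {c : _root_.Quotient (isIsomorphicSetoid (FDRep ℂ H)) //
    ∃ V : FDRep ℂ H, Quotient.mk (isIsomorphicSetoid (FDRep ℂ H)) V = c ∧
      Simple V ∧ p.Coprime (Module.finrank ℂ V)}

/-!
A conjugacy class of `G` has size prime to `p` exactly when the centralizers of its elements
contain a Sylow `p`-subgroup, i.e. when it meets `C_G(P)`; as `P` is the unique Sylow subgroup
of `N` and `C_G(P) ≤ N`, the `p'`-classes of `N` are exactly the `N`-classes meeting `C_G(P)`.
By Burnside's fusion argument, elements of `C_G(P)` that are conjugate in `G` are conjugate in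
`N`, so sending a `p'`-class of `G` to the `N`-class of any of its elements in `C_G(P)` is a
bijection onto the `p'`-classes of `N`.
For `s ∈ C_G(P)`, the McKay conjecture for `C_G(s)` and its Sylow subgroup `P` gives
`μ_p(C_G(s)) = μ_p(N_{C_G(s)}(P))`, and `N_{C_G(s)}(P) = C_N(s)`.
-/

namespace CategoryTheory.Equivalence

variable {C D : Type*} [Category C] [Category D]

def isoClassesEquiv (e : C ≌ D) :
    _root_.Quotient (isIsomorphicSetoid C) ≃ _root_.Quotient (isIsomorphicSetoid D) where
  toFun := Quotient.map e.functor.obj fun _ _ ⟨i⟩ => ⟨e.functor.mapIso i⟩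
  invFun := Quotient.map e.inverse.obj fun _ _ ⟨i⟩ => ⟨e.inverse.mapIso i⟩
  left_inv := Quotient.ind fun X => _root_.Quotient.sound ⟨(e.unitIso.app X).symm⟩
  right_inv := Quotient.ind fun Y => _root_.Quotient.sound ⟨e.counitIso.app Y⟩

end CategoryTheory.Equivalence

theorem mu_congr {H K : Type} [Group H] [Group K] (e : H ≃* K) (p : ℕ) : mu p H = mu p K := by
  let E : FDRep ℂ H ≌ FDRep ℂ K := Action.resEquiv _ e.symm
  refine Nat.card_congr (E.isoClassesEquiv.subtypeEquiv fun c => ?_)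
  induction c using Quotient.ind with | _ V => ?_
  constructor
  · rintro ⟨V', hV', hV's, hV'p⟩
    exact ⟨E.functor.obj V', Quotient.sound ⟨E.functor.mapIso (Quotient.exact hV').some⟩,
      simple_obj E.functor V', hV'p⟩
  · rintro ⟨W, hW, hWs, hWp⟩
    refine ⟨E.inverse.obj W, Quotient.sound
      ⟨E.inverse.mapIso (Quotient.exact hW).some ≪≫ (E.unitIso.app V).symm⟩,
      simple_obj E.inverse W, hWp⟩

namespace Subgroup

variable {G : Type*} [Group G]

theorem map_equiv_centralizer {G' : Type*} [Group G'] (e : G ≃* G') (s : Set G) :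
    (centralizer s).map (e : G →* G') = centralizer (e '' s) := by
  ext y
  rw [map_equiv_eq_comap_symm, mem_comap, mem_centralizer_iff, mem_centralizer_iff,
    Set.forall_mem_image]
  refine forall₂_congr fun x _ => ?_
  rw [← e.symm.injective.eq_iff]
  simp

theorem le_centralizer_singleton_iff {H : Subgroup G} {g : G} :
    H ≤ centralizer {g} ↔ g ∈ centralizer (H : Set G) := by
  simp [SetLike.le_def, mem_centralizer_iff, eq_comm]

noncomputable def centralizerEquivOfIsConj {g h : G} (hgh : IsConj g h) :
    centralizer {g} ≃* centralizer {h} :=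
  ((MulAut.conj (isConj_iff.mp hgh).choose).subgroupMap _).trans <| MulEquiv.subgroupCongr <| by
    rw [map_equiv_centralizer, Set.image_singleton, MulAut.conj_apply,
      (isConj_iff.mp hgh).choose_spec]

theorem centralizer_singleton_subgroupOf (K : Subgroup G) (k : K) :
    centralizer {k} = (centralizer {(k : G)}).subgroupOf K := by
  ext x
  simp [mem_subgroupOf, mem_centralizer_singleton_iff, Subtype.ext_iff]

noncomputable def subgroupOfEquivSubgroupOf (H K : Subgroup G) :
    H.subgroupOf K ≃* K.subgroupOf H :=
  (equivMapOfInjective _ _ K.subtype_injective).trans <|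
    (MulEquiv.subgroupCongr <| by
      rw [subgroupOf_map_subtype, subgroupOf_map_subtype, inf_comm]).trans
        (equivMapOfInjective _ _ H.subtype_injective).symm

noncomputable def normalizerSubgroupOfCentralizerEquiv {P : Subgroup G}
    (g : normalizer (P : Set G)) (hP : P ≤ centralizer {(g : G)}) :
    normalizer (P.subgroupOf (centralizer {(g : G)}) : Set (centralizer {(g : G)})) ≃*
      (centralizer {g} : Subgroup (normalizer (P : Set G))) :=
  (MulEquiv.subgroupCongr (subgroupOf_normalizer_eq hP).symm).trans <|
    (subgroupOfEquivSubgroupOf _ _).trans <|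
      MulEquiv.subgroupCongr (centralizer_singleton_subgroupOf _ g).symm

end Subgroup

theorem Nat.card_setOf_isConj {G : Type*} [Group G] (g : G) :
    Nat.card {h : G | IsConj g h} = (Subgroup.centralizer {g}).index := by
  have horbit : {h : G | IsConj g h} = MulAction.orbit (ConjAct G) g := by
    ext h
    rw [Set.mem_ofPred_eq, ConjAct.mem_orbit_conjAct, isConj_comm]
  rw [horbit, Nat.card_coe_set_eq, ← MulAction.index_stabilizer,
    Subgroup.centralizer_eq_comap_stabilizer]
  exact (Subgroup.index_comap_of_surjective _ (f := ConjAct.toConjAct.toMonoidHom)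
    ConjAct.toConjAct.surjective).symm

namespace Sylow

open Subgroup

variable {G : Type*} [Group G] [Finite G] {p : ℕ} [Fact p.Prime]

theorem not_dvd_index_of_le (P : Sylow p G) {K : Subgroup G} (h : ↑P ≤ K) : ¬ p ∣ K.index :=
  fun hK => P.not_dvd_index (hK.trans (index_dvd_of_le h))

theorem exists_le_of_not_dvd_index {K : Subgroup G} (hK : ¬ p ∣ K.index) :
    ∃ Q : Sylow p G, ↑Q ≤ K := by
  obtain ⟨Q₀⟩ : Nonempty (Sylow p K) := inferInstance
  have hQ : ¬ p ∣ (Q₀.map K.subtype).index := by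
    rw [index_map_subtype]
    exact Nat.Prime.not_dvd_mul Fact.out Q₀.not_dvd_index hK
  exact ⟨(Q₀.2.map K.subtype).toSylow hQ, map_subtype_le _⟩

theorem le_iff_not_dvd_index (P : Sylow p G) [(P : Subgroup G).Normal] {K : Subgroup G} :
    ↑P ≤ K ↔ ¬ p ∣ K.index := by
  refine ⟨P.not_dvd_index_of_le, fun hK => ?_⟩
  obtain ⟨Q, hQ⟩ := exists_le_of_not_dvd_index hK
  have := unique_of_normal P ‹_›
  rwa [Subsingleton.elim P Q]

theorem coprime_card_isConj_iff (P : Sylow p G) (g : G) :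
    p.Coprime (Nat.card {h : G | IsConj g h}) ↔
      ∃ h, IsConj g h ∧ h ∈ centralizer ((P : Subgroup G) : Set G) := by
  constructor
  · rw [Nat.card_setOf_isConj, Nat.Prime.coprime_iff_not_dvd Fact.out]
    intro hg
    obtain ⟨Q, hQ⟩ := exists_le_of_not_dvd_index hg
    obtain ⟨x, rfl⟩ := MulAction.exists_smul_eq G Q P
    refine ⟨x * g * x⁻¹, isConj_iff.mpr ⟨x, rfl⟩, le_centralizer_singleton_iff.mp ?_⟩
    rw [coe_subgroup_smul, Subgroup.pointwise_smul_def, ← MulAut.conj_apply,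
      ← Set.image_singleton, ← map_equiv_centralizer]
    exact map_mono hQ
  · rintro ⟨h, hgh, hP⟩
    have hclass : {x | IsConj g x} = {x | IsConj h x} :=
      Set.ext fun x => ⟨hgh.symm.trans, hgh.trans⟩
    rw [hclass, Nat.card_setOf_isConj, Nat.Prime.coprime_iff_not_dvd Fact.out]
    exact P.not_dvd_index_of_le (le_centralizer_singleton_iff.mpr hP)

theorem coprime_card_isConj_normalizer_iff (P : Sylow p G)
    (n : normalizer ((P : Subgroup G) : Set G)) :
    p.Coprime (Nat.card {m : normalizer ((P : Subgroup G) : Set G) | IsConj n m}) ↔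
      (n : G) ∈ centralizer ((P : Subgroup G) : Set G) := by
  have : ((P.subtype le_normalizer : Sylow p (normalizer ((P : Subgroup G) : Set G))) :
      Subgroup (normalizer ((P : Subgroup G) : Set G))).Normal := by
    rw [coe_subtype]; infer_instance
  rw [Nat.card_setOf_isConj, Nat.Prime.coprime_iff_not_dvd Fact.out,
    ← (P.subtype le_normalizer).le_iff_not_dvd_index, coe_subtype,
    centralizer_singleton_subgroupOf, subgroupOf, subgroupOf,
    comap_le_comap_of_le_range (by rw [range_subtype]; exact le_normalizer),
    le_centralizer_singleton_iff]

theorem isConj_of_mem_centralizer (P : Sylow p G) {n m : normalizer ((P : Subgroup G) : Set G)}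
    (hn : (n : G) ∈ centralizer ((P : Subgroup G) : Set G))
    (hm : (m : G) ∈ centralizer ((P : Subgroup G) : Set G))
    (hnm : IsConj (n : G) (m : G)) : IsConj n m := by
  obtain ⟨c, hc⟩ := isConj_iff.mp hnm
  obtain ⟨x, hx, hcx⟩ := P.conj_eq_normalizer_conj_of_mem_centralizer n c⁻¹ hn
    (by rwa [inv_inv, hc])
  refine isConj_iff.mpr ⟨⟨x, hx⟩⁻¹, Subtype.ext ?_⟩
  simp only [coe_mul, coe_inv, inv_inv]
  rw [← hcx, inv_inv, hc]

end Sylow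

/-- Assuming the McKay Conjecture for `p`: if `R` is a set of representatives for the
conjugacy classes of `G` of cardinality coprime to `p`, and `S` a set of representatives
for the conjugacy classes of `N = N_G(P)` of cardinality coprime to `p`, then
`Σ_{g ∈ R} μ_p(C_G(g)) = Σ_{n ∈ S} μ_p(C_N(n))`. -/
theorem sum_mu_centralizer_eq_of_mckay {p : ℕ} [Fact p.Prime]
    (MC : ∀ (H : Type) [Group H] [Fintype H] (Q : Sylow p H),
      mu p H = mu p (Subgroup.normalizer ((Q : Subgroup H) : Set H)))
    {G : Type} [Group G] [Fintype G] (P : Sylow p G)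
    (R : Finset G)
    (hR1 : ∀ g ∈ R, p.Coprime (Nat.card {h : G | IsConj g h}))
    (hR2 : ∀ g ∈ R, ∀ g' ∈ R, IsConj g g' → g = g')
    (hR3 : ∀ g : G, p.Coprime (Nat.card {h : G | IsConj g h}) → ∃ g' ∈ R, IsConj g g')
    (S : Finset (Subgroup.normalizer ((P : Subgroup G) : Set G)))
    (hS1 : ∀ n ∈ S, p.Coprime
      (Nat.card {m : (Subgroup.normalizer ((P : Subgroup G) : Set G) : Subgroup G) | IsConj n m}))
    (hS2 : ∀ n ∈ S, ∀ n' ∈ S, IsConj n n' → n = n')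
    (hS3 : ∀ n : (Subgroup.normalizer ((P : Subgroup G) : Set G) : Subgroup G),
      p.Coprime (Nat.card {m : (Subgroup.normalizer ((P : Subgroup G) : Set G) : Subgroup G) | IsConj n m}) →
        ∃ n' ∈ S, IsConj n n') :
    ∑ g ∈ R, mu p (Subgroup.centralizer {g})
      = ∑ n ∈ S, mu p (Subgroup.centralizer {n} :
          Subgroup (Subgroup.normalizer ((P : Subgroup G) : Set G))) := by
  have hS : ∀ s ∈ S, (s : G) ∈ Subgroup.centralizer ((P : Subgroup G) : Set G) := fun s hs =>
    (P.coprime_card_isConj_normalizer_iff s).mp (hS1 s hs)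
  have hR : ∀ g ∈ R, ∃ s ∈ S, IsConj g (s : G) := by
    intro g hg
    obtain ⟨h, hgh, hP⟩ := (P.coprime_card_isConj_iff g).mp (hR1 g hg)
    let n : Subgroup.normalizer ((P : Subgroup G) : Set G) :=
      ⟨h, Subgroup.centralizer_le_normalizer _ hP⟩
    obtain ⟨s, hs, hns⟩ := hS3 n ((P.coprime_card_isConj_normalizer_iff n).mpr hP)
    exact ⟨s, hs, hgh.trans ((Subgroup.normalizer _).subtype.map_isConj hns)⟩
  choose φ hφS hφ using hR
  refine Finset.sum_bij φ hφS (fun g₁ hg₁ g₂ hg₂ h => hR2 g₁ hg₁ g₂ hg₂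
    ((hφ g₁ hg₁).trans (h ▸ hφ g₂ hg₂).symm)) (fun s hs => ?_) (fun g hg => ?_)
  · obtain ⟨g, hg, hsg⟩ := hR3 s ((P.coprime_card_isConj_iff s).mpr ⟨s, .refl _, hS s hs⟩)
    exact ⟨g, hg, hS2 _ (hφS g hg) s hs (P.isConj_of_mem_centralizer (hS _ (hφS g hg)) (hS s hs)
      ((hφ g hg).symm.trans hsg.symm))⟩
  · have hle : (P : Subgroup G) ≤ Subgroup.centralizer {(φ g hg : G)} :=
      Subgroup.le_centralizer_singleton_iff.mpr (hS _ (hφS g hg))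
    have := Fintype.ofFinite (Subgroup.centralizer {(φ g hg : G)})
    rw [mu_congr (Subgroup.centralizerEquivOfIsConj (hφ g hg)), MC _ (P.subtype hle),
      Sylow.coe_subtype, mu_congr (Subgroup.normalizerSubgroupOfCentralizerEquiv _ hle)]
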